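/- Suppose b = c = 0, β² ≡ D (mod p^a), and m = [[p^a, β, γ₁],[0,1,γ₂],[0,0,1]]. Then u = [[u₁₁, u₁₂],[u₁₂, u₂₂]] ∈ U_m if and only if u₁₁ ∈ p^{-a}Z_p, u₁₂ + β u₁₁ ∈ Z_p, and u₂₂ + β u₁₂ ∈ Z_p; and for every such u, χ(u) = ψ(u₁₁(β² - D)) = 1. Hence U_m ⊆ ker χ, and the additive Haar measure of U_m/(symmetric matrices in M_2(Z_p)) equals p^a. -/

import Mathlib

/-!
With `b = c = 0` the conditions on `γ₁, γ₂` are implied by integrality of `u y`, and for symmetric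
`u` the entries of `u y` are `p^a u₁₁`, `u₁₂ + β u₁₁`, `p^a u₁₂` and `u₂₂ + β u₁₂`. The identity
`-D u₁₁ + u₂₂ = u₁₁ (β² - D) + (u₂₂ + β u₁₂) - β (u₁₂ + β u₁₁)` evaluates `χ`, and
`‖u₁₁ (β² - D)‖ ≤ p^a p^{-a} = 1` kills it. Modulo integral matrices, `u ∈ U_m` is determined by
`u₁₁ ∈ p^{-a}ℤ_p / ℤ_p ≅ ℤ/p^a`, and every class is hit by the rank-one matrix `u₁₁ (1, -β)ᵀ(1, -β)`.
-/

open scoped Matrix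

/-- The matrix y = [[p^a, β],[0, p^b]]. -/
noncomputable def yMat (p a b : ℕ) [Fact p.Prime] (β : ℚ_[p]) : Matrix (Fin 2) (Fin 2) ℚ_[p] :=
  !![(p : ℚ_[p]) ^ a, β; 0, (p : ℚ_[p]) ^ b]

/-- Membership in U_m: u is symmetric, u·y is integral, and the row vector
(γ₁,γ₂)·u·y lies in p^c ℤ_p ⊕ p^{min(b,c)} ℤ_p. -/
def memUm (p : ℕ) [Fact p.Prime] (a b c : ℕ) (β γ₁ γ₂ : ℚ_[p])
    (u : Matrix (Fin 2) (Fin 2) ℚ_[p]) : Prop :=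
  u.IsSymm ∧ (∀ i j, ‖(u * yMat p a b β) i j‖ ≤ 1) ∧
  ‖γ₁ * (u * yMat p a b β) 0 0 + γ₂ * (u * yMat p a b β) 1 0‖ ≤ (p : ℝ) ^ (-(c : ℤ)) ∧
  ‖γ₁ * (u * yMat p a b β) 0 1 + γ₂ * (u * yMat p a b β) 1 1‖ ≤ (p : ℝ) ^ (-(min b c : ℤ))

/-- χ(n(u)) = ψ(-D·u₁₁ + u₂₂). -/
noncomputable def chiUm (p : ℕ) [Fact p.Prime] (ψ : ℚ_[p] → ℂ) (D : ℚ_[p])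
    (u : Matrix (Fin 2) (Fin 2) ℚ_[p]) : ℂ :=
  ψ (-D * u 0 0 + u 1 1)

lemma IsUltrametricDist.norm_sub_le_of_le_of_le {S : Type*} [SeminormedAddCommGroup S]
    [IsUltrametricDist S] {x y : S} {r : ℝ} (hx : ‖x‖ ≤ r) (hy : ‖y‖ ≤ r) : ‖x - y‖ ≤ r := by
  rw [sub_eq_add_neg]
  exact (norm_add_le_max x (-y)).trans (max_le hx (by rwa [norm_neg]))

lemma PadicInt.toZModPow_eq_toZModPow_iff {p : ℕ} [Fact p.Prime] {n : ℕ} (z w : ℤ_[p]) :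
    toZModPow n z = toZModPow n w ↔ ‖z - w‖ ≤ (p : ℝ) ^ (-(n : ℤ)) := by
  rw [← sub_eq_zero, ← map_sub, ← RingHom.mem_ker, ker_toZModPow, norm_le_pow_iff_mem_span_pow]

namespace Padic

variable {p : ℕ} [Fact p.Prime]

lemma norm_mul_pow_le_one_iff (x : ℚ_[p]) (a : ℕ) :
    ‖x * (p : ℚ_[p]) ^ a‖ ≤ 1 ↔ ‖x‖ ≤ (p : ℝ) ^ (a : ℤ) := by
  have hp : (0 : ℝ) < p := by exact_mod_cast (Fact.out : p.Prime).pos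
  rw [norm_mul, norm_p_pow, ← le_div_iff₀ (zpow_pos hp _), one_div, ← zpow_neg, neg_neg]

lemma norm_mul_le_one_of_le_zpow {x y : ℚ_[p]} {a : ℤ} (hx : ‖x‖ ≤ (p : ℝ) ^ a)
    (hy : ‖y‖ ≤ (p : ℝ) ^ (-a)) : ‖x * y‖ ≤ 1 := by
  have hp : (0 : ℝ) < p := by exact_mod_cast (Fact.out : p.Prime).pos
  calc ‖x * y‖ = ‖x‖ * ‖y‖ := norm_mul x y
    _ ≤ (p : ℝ) ^ a * (p : ℝ) ^ (-a) := by gcongr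
    _ = 1 := by rw [← zpow_add₀ hp.ne', add_neg_cancel, zpow_zero]

/-- `x ↦ p^a x mod p^a` on `p^{-a}ℤ_p`, inducing `p^{-a}ℤ_p / ℤ_p ≅ ℤ/p^a`. -/
noncomputable def toZModPowOfNormLe (a : ℕ) (x : ℚ_[p]) (hx : ‖x‖ ≤ (p : ℝ) ^ (a : ℤ)) :
    ZMod (p ^ a) :=
  PadicInt.toZModPow a ⟨x * (p : ℚ_[p]) ^ a, (norm_mul_pow_le_one_iff x a).2 hx⟩

lemma toZModPowOfNormLe_eq_iff {a : ℕ} {x y : ℚ_[p]} (hx : ‖x‖ ≤ (p : ℝ) ^ (a : ℤ))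
    (hy : ‖y‖ ≤ (p : ℝ) ^ (a : ℤ)) :
    toZModPowOfNormLe a x hx = toZModPowOfNormLe a y hy ↔ ‖x - y‖ ≤ 1 := by
  have hp : (0 : ℝ) < p := by exact_mod_cast (Fact.out : p.Prime).pos
  refine (PadicInt.toZModPow_eq_toZModPow_iff _ _).trans ?_
  change ‖x * (p : ℚ_[p]) ^ a - y * (p : ℚ_[p]) ^ a‖ ≤ _ ↔ _
  rw [← sub_mul, norm_mul, norm_p_pow, mul_le_iff_le_one_left (zpow_pos hp _)]

lemma exists_toZModPowOfNormLe_eq {a : ℕ} (r : ZMod (p ^ a)) :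
    ∃ x hx, toZModPowOfNormLe (p := p) a x hx = r := by
  obtain ⟨n, rfl⟩ := ZMod.natCast_zmod_surjective r
  have hpa : (p : ℚ_[p]) ^ a ≠ 0 := pow_ne_zero a (Nat.cast_ne_zero.2 (Fact.out : p.Prime).ne_zero)
  have hn : (n : ℚ_[p]) / (p : ℚ_[p]) ^ a * (p : ℚ_[p]) ^ a = (n : ℤ_[p]) := by
    rw [div_mul_cancel₀ _ hpa, PadicInt.coe_natCast]
  refine ⟨n / (p : ℚ_[p]) ^ a, (norm_mul_pow_le_one_iff _ a).1 (hn ▸ PadicInt.norm_le_one _), ?_⟩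
  rw [toZModPowOfNormLe, ← map_natCast (PadicInt.toZModPow (p := p) a) n]
  exact congrArg _ (Subtype.ext hn)

end Padic

section LocalDensity

variable {p : ℕ} [Fact p.Prime] {a b c : ℕ} {β γ₁ γ₂ : ℚ_[p]}

open IsUltrametricDist

lemma memUm.sub {u v : Matrix (Fin 2) (Fin 2) ℚ_[p]} (hu : memUm p a b c β γ₁ γ₂ u)
    (hv : memUm p a b c β γ₁ γ₂ v) : memUm p a b c β γ₁ γ₂ (u - v) := by
  obtain ⟨hus, hu₁, hu₂, hu₃⟩ := hu
  obtain ⟨hvs, hv₁, hv₂, hv₃⟩ := hv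
  simp only [memUm, Matrix.sub_mul, Matrix.sub_apply, mul_sub, sub_add_sub_comm]
  exact ⟨hus.sub hvs, fun i j => norm_sub_le_of_le_of_le (hu₁ i j) (hv₁ i j),
    norm_sub_le_of_le_of_le hu₂ hv₂, norm_sub_le_of_le_of_le hu₃ hv₃⟩

lemma memUm_zero_iff (hγ₁ : ‖γ₁‖ ≤ 1) (hγ₂ : ‖γ₂‖ ≤ 1) (u : Matrix (Fin 2) (Fin 2) ℚ_[p]) :
    memUm p a b 0 β γ₁ γ₂ u ↔ u.IsSymm ∧ ∀ i j, ‖(u * yMat p a b β) i j‖ ≤ 1 := by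
  have hint : ∀ x y : ℚ_[p], ‖x‖ ≤ 1 → ‖y‖ ≤ 1 → ‖γ₁ * x + γ₂ * y‖ ≤ 1 := fun x y hx hy =>
    (PadicInt.subring p).add_mem ((PadicInt.subring p).mul_mem hγ₁ hx)
      ((PadicInt.subring p).mul_mem hγ₂ hy)
  simp only [memUm, CharP.cast_eq_zero, neg_zero, zpow_zero,
    min_eq_right (Nat.cast_nonneg (α := ℤ) b)]
  exact ⟨fun h => ⟨h.1, h.2.1⟩,
    fun h => ⟨h.1, h.2, hint _ _ (h.2 0 0) (h.2 1 0), hint _ _ (h.2 0 1) (h.2 1 1)⟩⟩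

lemma mul_yMat_zero_of_isSymm {u : Matrix (Fin 2) (Fin 2) ℚ_[p]} (hu : u.IsSymm) :
    u * yMat p a 0 β = !![u 0 0 * (p : ℚ_[p]) ^ a, u 0 1 + β * u 0 0;
      u 0 1 * (p : ℚ_[p]) ^ a, u 1 1 + β * u 0 1] := by
  have h10 : u 1 0 = u 0 1 := hu.apply 0 1
  ext i j
  fin_cases i <;> fin_cases j <;>
    simp [yMat, Matrix.mul_apply, Fin.sum_univ_two, h10] <;> ring

lemma forall_norm_mul_yMat_zero_le_one_iff (hβ : ‖β‖ ≤ 1) {u : Matrix (Fin 2) (Fin 2) ℚ_[p]}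
    (hu : u.IsSymm) :
    (∀ i j, ‖(u * yMat p a 0 β) i j‖ ≤ 1) ↔
      ‖u 0 0‖ ≤ (p : ℝ) ^ (a : ℤ) ∧ ‖u 0 1 + β * u 0 0‖ ≤ 1 ∧ ‖u 1 1 + β * u 0 1‖ ≤ 1 := by
  simp only [mul_yMat_zero_of_isSymm hu, Fin.forall_fin_two, Matrix.of_apply,
    Matrix.cons_val', Matrix.cons_val_zero, Matrix.cons_val_one, Matrix.empty_val',
    Matrix.cons_val_fin_one, Padic.norm_mul_pow_le_one_iff]
  refine ⟨fun h => ⟨h.1.1, h.1.2, h.2.2⟩, fun ⟨h₀₀, h₀₁, h₁₁⟩ => ⟨⟨h₀₀, h₀₁⟩, ?_, h₁₁⟩⟩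
  have hpa : (1 : ℝ) ≤ (p : ℝ) ^ (a : ℤ) := by
    rw [zpow_natCast]; exact one_le_pow₀ (by exact_mod_cast (Fact.out : p.Prime).one_lt.le)
  have hβu : ‖β * u 0 0‖ ≤ (p : ℝ) ^ (a : ℤ) := by
    rw [norm_mul]; exact (mul_le_of_le_one_left (norm_nonneg _) hβ).trans h₀₀
  simpa using norm_sub_le_of_le_of_le (h₀₁.trans hpa) hβu

lemma memUm_zero_zero_iff (hβ : ‖β‖ ≤ 1) (hγ₁ : ‖γ₁‖ ≤ 1) (hγ₂ : ‖γ₂‖ ≤ 1)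
    (u : Matrix (Fin 2) (Fin 2) ℚ_[p]) :
    memUm p a 0 0 β γ₁ γ₂ u ↔ u.IsSymm ∧ ‖u 0 0‖ ≤ (p : ℝ) ^ (a : ℤ) ∧
      ‖u 0 1 + β * u 0 0‖ ≤ 1 ∧ ‖u 1 1 + β * u 0 1‖ ≤ 1 := by
  rw [memUm_zero_iff hγ₁ hγ₂]
  exact and_congr_right (forall_norm_mul_yMat_zero_le_one_iff hβ)

lemma forall_norm_apply_le_one_iff (hβ : ‖β‖ ≤ 1) {u : Matrix (Fin 2) (Fin 2) ℚ_[p]}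
    (hu : u.IsSymm) (h₀₁ : ‖u 0 1 + β * u 0 0‖ ≤ 1) (h₁₁ : ‖u 1 1 + β * u 0 1‖ ≤ 1) :
    (∀ i j, ‖u i j‖ ≤ 1) ↔ ‖u 0 0‖ ≤ 1 := by
  refine ⟨fun h => h 0 0, fun h₀₀ => ?_⟩
  have hu₀₁ : ‖u 0 1‖ ≤ 1 := by
    simpa using (PadicInt.subring p).sub_mem h₀₁ ((PadicInt.subring p).mul_mem hβ h₀₀)
  have hu₁₁ : ‖u 1 1‖ ≤ 1 := by
    simpa using (PadicInt.subring p).sub_mem h₁₁ ((PadicInt.subring p).mul_mem hβ hu₀₁)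
  simp only [Fin.forall_fin_two, hu.apply 0 1]
  exact ⟨⟨h₀₀, hu₀₁⟩, hu₀₁, hu₁₁⟩

lemma exists_memUm_zero_zero_apply_eq (hβ : ‖β‖ ≤ 1) (hγ₁ : ‖γ₁‖ ≤ 1) (hγ₂ : ‖γ₂‖ ≤ 1)
    {x : ℚ_[p]} (hx : ‖x‖ ≤ (p : ℝ) ^ (a : ℤ)) :
    ∃ u, memUm p a 0 0 β γ₁ γ₂ u ∧ u 0 0 = x := by
  refine ⟨!![x, -(β * x); -(β * x), β ^ 2 * x], ?_, rfl⟩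
  rw [memUm_zero_zero_iff hβ hγ₁ hγ₂]
  refine ⟨?_, hx, ?_, ?_⟩
  · exact Matrix.IsSymm.ext fun i j => by fin_cases i <;> fin_cases j <;> rfl
  · simp
  · simp [sq, mul_assoc]

lemma chiUm_eq_of_norm_le_one (ψ : ℚ_[p] → ℂ) (D : ℚ_[p]) (hψ : ∀ x y, ψ (x + y) = ψ x * ψ y)
    (hψ_one : ∀ x, ‖x‖ ≤ 1 → ψ x = 1) (hβ : ‖β‖ ≤ 1) {u : Matrix (Fin 2) (Fin 2) ℚ_[p]}
    (h₀₁ : ‖u 0 1 + β * u 0 0‖ ≤ 1) (h₁₁ : ‖u 1 1 + β * u 0 1‖ ≤ 1) :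
    chiUm p ψ D u = ψ (u 0 0 * (β ^ 2 - D)) := by
  have hint : ‖(u 1 1 + β * u 0 1) - β * (u 0 1 + β * u 0 0)‖ ≤ 1 :=
    (PadicInt.subring p).sub_mem h₁₁ ((PadicInt.subring p).mul_mem hβ h₀₁)
  rw [chiUm, show -D * u 0 0 + u 1 1 =
      u 0 0 * (β ^ 2 - D) + ((u 1 1 + β * u 0 1) - β * (u 0 1 + β * u 0 0)) by ring,
    hψ, hψ_one _ hint, mul_one]

end LocalDensity

theorem stmt10_general {p : ℕ} [Fact p.Prime] (a : ℕ)
    (β γ₁ γ₂ D : ℚ_[p]) (ψ : ℚ_[p] → ℂ)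
    (hψ : ∀ x y, ψ (x + y) = ψ x * ψ y) (hψtriv : ∀ x, ψ x = 1 ↔ ‖x‖ ≤ 1)
    (hβ : ‖β‖ ≤ 1) (hγ₁ : ‖γ₁‖ ≤ 1) (hγ₂ : ‖γ₂‖ ≤ 1)
    (hcong : ‖β ^ 2 - D‖ ≤ (p : ℝ) ^ (-(a : ℤ))) :
    (∀ u : Matrix (Fin 2) (Fin 2) ℚ_[p], u.IsSymm →
      (memUm p a 0 0 β γ₁ γ₂ u ↔
        (‖u 0 0‖ ≤ (p : ℝ) ^ (a : ℤ) ∧ ‖u 0 1 + β * u 0 0‖ ≤ 1 ∧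
          ‖u 1 1 + β * u 0 1‖ ≤ 1))) ∧
    (∀ u, memUm p a 0 0 β γ₁ γ₂ u →
      chiUm p ψ D u = ψ (u 0 0 * (β ^ 2 - D)) ∧ chiUm p ψ D u = 1) ∧
    ∃ φ : {u : Matrix (Fin 2) (Fin 2) ℚ_[p] // memUm p a 0 0 β γ₁ γ₂ u} →
        ZMod (p ^ a),
      Function.Surjective φ ∧
      ∀ u v, φ u = φ v ↔ (∀ i j, ‖(u.1 - v.1) i j‖ ≤ 1) := by
  have hmem := memUm_zero_zero_iff (a := a) hβ hγ₁ hγ₂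
  refine ⟨fun u hu => by rw [hmem, and_iff_right hu], fun u hu => ?_, ?_⟩
  · obtain ⟨-, h₀₀, h₀₁, h₁₁⟩ := (hmem u).1 hu
    have hχ := chiUm_eq_of_norm_le_one ψ D hψ (fun x => (hψtriv x).2) hβ h₀₁ h₁₁
    exact ⟨hχ, hχ.trans ((hψtriv _).2 (Padic.norm_mul_le_one_of_le_zpow h₀₀ hcong))⟩
  refine ⟨fun u => Padic.toZModPowOfNormLe a (u.1 0 0) ((hmem u.1).1 u.2).2.1, fun r => ?_,
    fun u v => ?_⟩
  · obtain ⟨x, hx, rfl⟩ := Padic.exists_toZModPowOfNormLe_eq (p := p) r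
    obtain ⟨u, hu, hux⟩ := exists_memUm_zero_zero_apply_eq hβ hγ₁ hγ₂ hx
    exact ⟨⟨u, hu⟩, (Padic.toZModPowOfNormLe_eq_iff _ _).2 (by simp [hux])⟩
  · obtain ⟨hs, -, h₀₁, h₁₁⟩ := (hmem _).1 (u.2.sub v.2)
    rw [Padic.toZModPowOfNormLe_eq_iff, forall_norm_apply_le_one_iff hβ hs h₀₁ h₁₁,
      Matrix.sub_apply]

theorem stmt10 {p : ℕ} [Fact p.Prime] (hp2 : p ≠ 2) (a : ℕ)
    (β γ₁ γ₂ D : ℚ_[p]) (ψ : ℚ_[p] → ℂ)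
    (hψ : ∀ x y, ψ (x + y) = ψ x * ψ y) (hψtriv : ∀ x, ψ x = 1 ↔ ‖x‖ ≤ 1)
    (hD : ‖D‖ = 1) (hβ : ‖β‖ ≤ 1) (hγ₁ : ‖γ₁‖ ≤ 1) (hγ₂ : ‖γ₂‖ ≤ 1)
    (hcong : ‖β ^ 2 - D‖ ≤ (p : ℝ) ^ (-(a : ℤ))) :
    (∀ u : Matrix (Fin 2) (Fin 2) ℚ_[p], u.IsSymm →
      (memUm p a 0 0 β γ₁ γ₂ u ↔
        (‖u 0 0‖ ≤ (p : ℝ) ^ (a : ℤ) ∧ ‖u 0 1 + β * u 0 0‖ ≤ 1 ∧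
          ‖u 1 1 + β * u 0 1‖ ≤ 1))) ∧
    (∀ u, memUm p a 0 0 β γ₁ γ₂ u →
      chiUm p ψ D u = ψ (u 0 0 * (β ^ 2 - D)) ∧ chiUm p ψ D u = 1) ∧
    ∃ φ : {u : Matrix (Fin 2) (Fin 2) ℚ_[p] // memUm p a 0 0 β γ₁ γ₂ u} →
        ZMod (p ^ a),
      Function.Surjective φ ∧
      ∀ u v, φ u = φ v ↔ (∀ i j, ‖(u.1 - v.1) i j‖ ≤ 1) :=
  stmt10_general a β γ₁ γ₂ D ψ hψ hψtriv hβ hγ₁ hγ₂ hcong
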